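/- If v_1, …, v_n are nonzero vectors in ℝ^d such that the angle between any two distinct vectors v_i and v_j is at least π/2 (equivalently, the inner product ⟨v_i, v_j⟩ is nonpositive for all i ≠ j), then n ≤ 2d. -/

import Mathlib

/-!
Induct on the dimension. Fix a vector `u` of the family. The members lying on the line `ℝ ∙ u`
are nonzero multiples of `u` with pairwise nonpositive inner products, so there are at most two
of them, one on each side of `0`. Every other member `x` has `⟪u, x⟫ ≤ 0`, and projecting such
vectors onto `(ℝ ∙ u)ᗮ` subtracts `⟪u, x⟫ * ⟪u, y⟫ / ‖u‖ ^ 2 ≥ 0` from their inner products; so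
their projections form a nonacute family of nonzero vectors in one dimension less.
-/

open scoped InnerProductSpace

open Module Submodule

variable {E : Type*} [NormedAddCommGroup E] [InnerProductSpace ℝ E]

theorem inner_mul_norm_sq_of_mem_span_singleton {u x : E} (hx : x ∈ ℝ ∙ u) (y : E) :
    ⟪x, y⟫_ℝ * ‖u‖ ^ 2 = ⟪u, x⟫_ℝ * ⟪u, y⟫_ℝ := by
  obtain ⟨a, rfl⟩ := mem_span_singleton.mp hx
  simp only [real_inner_smul_left, real_inner_smul_right, real_inner_self_eq_norm_sq]
  ring

theorem inner_starProjection_orthogonal_span_singleton (u x y : E) :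
    ⟪(ℝ ∙ u)ᗮ.starProjection x, (ℝ ∙ u)ᗮ.starProjection y⟫_ℝ =
      ⟪x, y⟫_ℝ - ⟪u, x⟫_ℝ * ⟪u, y⟫_ℝ / ‖u‖ ^ 2 := by
  rw [inner_starProjection_left_eq_right, ← ContinuousLinearMap.comp_apply,
    ← ContinuousLinearMap.mul_def, (isIdempotentElem_starProjection _).eq,
    starProjection_orthogonal_val, starProjection_singleton, inner_sub_right,
    real_inner_smul_right, real_inner_comm u x]
  simp only [RCLike.ofReal_real_eq_id, id_eq]
  ring

theorem inner_starProjection_orthogonal_span_singleton_le {u x y : E}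
    (hx : ⟪u, x⟫_ℝ ≤ 0) (hy : ⟪u, y⟫_ℝ ≤ 0) :
    ⟪(ℝ ∙ u)ᗮ.starProjection x, (ℝ ∙ u)ᗮ.starProjection y⟫_ℝ ≤ ⟪x, y⟫_ℝ := by
  rw [inner_starProjection_orthogonal_span_singleton, sub_le_self_iff]
  exact div_nonneg (mul_nonneg_of_nonpos_of_nonpos hx hy) (sq_nonneg _)

theorem inner_ne_zero_of_mem_span_singleton {u x : E} (hx₀ : x ≠ 0) (hx : x ∈ ℝ ∙ u) :
    ⟪u, x⟫_ℝ ≠ 0 := by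
  have hu : u ≠ 0 := by
    rintro rfl
    exact hx₀ (by simpa using hx)
  intro h
  have := inner_mul_norm_sq_of_mem_span_singleton hx x
  rw [h, zero_mul, real_inner_self_eq_norm_sq] at this
  exact mul_ne_zero (pow_ne_zero 2 (norm_ne_zero_iff.mpr hx₀))
    (pow_ne_zero 2 (norm_ne_zero_iff.mpr hu)) this

theorem card_le_two_of_mem_span_singleton {ι : Type*} [Fintype ι] {u : E} {v : ι → E}
    (hv : ∀ i, v i ≠ 0) (hu : ∀ i, v i ∈ ℝ ∙ u) (h : Pairwise fun i j => ⟪v i, v j⟫_ℝ ≤ 0) :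
    Fintype.card ι ≤ 2 := by
  have hcoord i : ⟪u, v i⟫_ℝ ≠ 0 := inner_ne_zero_of_mem_span_singleton (hv i) (hu i)
  have hinj : Function.Injective fun i => decide (0 < ⟪u, v i⟫_ℝ) := by
    intro i j hij
    by_contra hne
    have hpos : 0 < ⟪u, v i⟫_ℝ * ⟪u, v j⟫_ℝ := by
      simp only [decide_eq_decide] at hij
      rcases (hcoord i).lt_or_gt with hi | hi
      · exact mul_pos_of_neg_of_neg hi <|
          (hcoord j).lt_or_gt.resolve_right fun hj => hi.not_gt (hij.mpr hj)
      · exact mul_pos hi (hij.mp hi)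
    rw [← inner_mul_norm_sq_of_mem_span_singleton (hu i)] at hpos
    exact hpos.not_ge (mul_nonpos_of_nonpos_of_nonneg (h hne) (sq_nonneg _))
  simpa using Fintype.card_le_of_injective _ hinj

theorem card_le_two_mul_finrank_of_pairwise_inner_nonpos {ι : Type*} [Fintype ι]
    [FiniteDimensional ℝ E] {v : ι → E} (hv : ∀ i, v i ≠ 0)
    (h : Pairwise fun i j => ⟪v i, v j⟫_ℝ ≤ 0) :
    Fintype.card ι ≤ 2 * finrank ℝ E := by
  obtain ⟨n, hn⟩ : ∃ n, finrank ℝ E = n := ⟨_, rfl⟩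
  induction n generalizing E ι with
  | zero =>
    have : Subsingleton E := finrank_zero_iff.mp hn
    have : IsEmpty ι := ⟨fun i => hv i (Subsingleton.elim _ _)⟩
    simp
  | succ n ih =>
    rcases isEmpty_or_nonempty ι with _ | ⟨⟨i₀⟩⟩
    · simp
    classical
    set u := v i₀
    set K := (ℝ ∙ u)ᗮ
    have hK : finrank ℝ K = n :=
      finrank_add_finrank_orthogonal' (by rw [finrank_span_singleton (hv i₀), hn, add_comm])
    have hline : Fintype.card {i // v i ∈ ℝ ∙ u} ≤ 2 :=
      card_le_two_of_mem_span_singleton (fun i => hv i) (fun i => i.2)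
        (h.comp_of_injective Subtype.val_injective)
    have hrest : Fintype.card {i // v i ∉ ℝ ∙ u} ≤ 2 * n := by
      refine hK ▸ ih (v := fun i => K.orthogonalProjectionOnto (v i)) ?_ ?_ hK
      · intro i
        simpa [K, orthogonal_orthogonal] using i.2
      · intro i j hij
        have hne (k : {i // v i ∉ ℝ ∙ u}) : k.1 ≠ i₀ := fun hk =>
          k.2 (hk ▸ mem_span_singleton_self u)
        rw [coe_inner, ← starProjection_apply, ← starProjection_apply]
        exact (inner_starProjection_orthogonal_span_singleton_le (h (hne i).symm)
          (h (hne j).symm)).trans (h (Subtype.val_injective.ne hij))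
    have := Fintype.card_subtype_compl (fun i => v i ∈ ℝ ∙ u)
    have := Fintype.card_subtype_le (fun i => v i ∈ ℝ ∙ u)
    omega

/-- Rankin: if nonzero vectors in ℝ^d pairwise have nonpositive inner
products (i.e. pairwise angles at least π/2), then there are at most `2 * d`
of them. -/
theorem rankin_nonacute {n d : ℕ} (v : Fin n → EuclideanSpace ℝ (Fin d))
    (hv : ∀ i, v i ≠ 0)
    (hangle : ∀ i j, i ≠ j → ⟪v i, v j⟫_ℝ ≤ 0) :
    n ≤ 2 * d := by
  simpa using card_le_two_mul_finrank_of_pairwise_inner_nonpos hv hangle
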